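/- Let ρ be a density matrix on ℂ^d and let Ψ and Φ be quantum channels on ℂ^d with Kraus operators {L_i}_{i=1}^m and {K_j}_{j=1}^n. Then Ĩ_ρ(Ψ) · J̃_ρ(Φ) ≥ (1/4) Σ_{i,j} |tr([L_i, K_j†] ρ)|², where Ĩ_ρ(Ψ) = I_ρ(Ψ) and J̃_ρ(Φ) = 2·V_ρ(Φ) − I_ρ(Φ). -/

import Mathlib

open Matrix
open scoped ComplexOrder

noncomputable section

/-- Variance of an operator `K` with respect to a state `ρ`:
`V_ρ(K) = ½ tr((K†K + KK†)ρ) − |tr(Kρ)|²`. -/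
def opVar {d : ℕ} (ρ K : Matrix (Fin d) (Fin d) ℂ) : ℝ :=
  (((Kᴴ * K + K * Kᴴ) * ρ).trace).re / 2 - ‖(K * ρ).trace‖ ^ 2

/-- Variance of a channel with Kraus operators `K i`: `V_ρ(Φ) = Σ_i V_ρ(K_i)`. -/
def chanVar {d n : ℕ} (ρ : Matrix (Fin d) (Fin d) ℂ)
    (K : Fin n → Matrix (Fin d) (Fin d) ℂ) : ℝ :=
  ∑ i, opVar ρ (K i)

/-- The PSD square root `U diag(√λ) U*` (the former `Matrix.PosSemidef.sqrt`). -/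
def psdSqrt {d : ℕ} {ρ : Matrix (Fin d) (Fin d) ℂ} (hρ : ρ.PosSemidef) :
    Matrix (Fin d) (Fin d) ℂ :=
  (hρ.1.eigenvectorUnitary : Matrix (Fin d) (Fin d) ℂ) *
    diagonal (fun i => ((Real.sqrt (hρ.1.eigenvalues i) : ℝ) : ℂ)) *
    (star hρ.1.eigenvectorUnitary : Matrix (Fin d) (Fin d) ℂ)

/-- Wigner–Yanase skew information of a channel with Kraus operators `K i`:
`I_ρ(Φ) = ½ Σ_i ‖[√ρ, K_i]‖_F²`, where `√ρ` is the PSD square root of `ρ`. -/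
def chanSkew {d n : ℕ} (ρ : Matrix (Fin d) (Fin d) ℂ) (hρ : ρ.PosSemidef)
    (K : Fin n → Matrix (Fin d) (Fin d) ℂ) : ℝ :=
  (1 / 2) * ∑ i,
    (((psdSqrt hρ * K i - K i * psdSqrt hρ)ᴴ * (psdSqrt hρ * K i - K i * psdSqrt hρ)).trace).re

/-- Quantum uncertainty of a channel:
`Q_ρ(Φ) = √(V_ρ(Φ)² − (V_ρ(Φ) − I_ρ(Φ))²)`. -/
def chanQ {d n : ℕ} (ρ : Matrix (Fin d) (Fin d) ℂ) (hρ : ρ.PosSemidef)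
    (K : Fin n → Matrix (Fin d) (Fin d) ℂ) : ℝ :=
  Real.sqrt ((chanVar ρ K) ^ 2 - (chanVar ρ K - chanSkew ρ hρ K) ^ 2)

/-!
Put `s = √ρ`, `A_i = [s, L_i]` and `B_j = {s, K_j†} - 2 tr(K_j† ρ) s`. Cyclicity of the trace gives
`tr(A_i B_j) = tr([L_i, K_j†] ρ)` (the `s`-term contributes `tr([s, L_i] s) = 0`), so Cauchy–Schwarz
for the Frobenius inner product bounds each summand by `‖A_i‖² ‖B_j‖²`, and the double sum by
`(Σ ‖A_i‖²)(Σ ‖B_j‖²)`. Here `Σ ‖A_i‖² = 2 I_ρ(Ψ)`, while the parallelogram law for `s K_j†` and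
`K_j† s`, together with `⟨s, {s, K_j†}⟩ = 2 tr(K_j† ρ)` and `‖s‖ = 1`, gives
`‖B_j‖² = 4 V_ρ(K_j) - ‖[s, K_j]‖²`, hence `Σ ‖B_j‖² = 2 J̃_ρ(Φ)`.
-/

open scoped InnerProductSpace

namespace Matrix
variable {m n 𝕜 : Type*} [Fintype m] [Fintype n] [RCLike 𝕜]

lemma trace_mul_eq_inner_vec (A : Matrix m n 𝕜) (B : Matrix n m 𝕜) :
    (A * B).trace = ⟪WithLp.toLp 2 (vec Aᴴ), WithLp.toLp 2 (vec B)⟫_𝕜 := by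
  rw [EuclideanSpace.inner_toLp_toLp, dotProduct_comm, star_vec_dotProduct_vec,
    conjTranspose_conjTranspose]

lemma re_trace_conjTranspose_mul_self_eq_norm_sq (A : Matrix m n 𝕜) :
    RCLike.re (Aᴴ * A).trace = ‖WithLp.toLp 2 (vec A)‖ ^ 2 := by
  rw [← conjTranspose_conjTranspose A, trace_mul_eq_inner_vec, conjTranspose_conjTranspose,
    inner_self_eq_norm_sq]

lemma norm_trace_mul_sq_le (A : Matrix m n 𝕜) (B : Matrix n m 𝕜) :
    ‖(A * B).trace‖ ^ 2 ≤ RCLike.re (Aᴴ * A).trace * RCLike.re (Bᴴ * B).trace := by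
  have hA : RCLike.re (Aᴴ * A).trace = ‖WithLp.toLp 2 (vec Aᴴ)‖ ^ 2 := by
    rw [trace_mul_comm, ← re_trace_conjTranspose_mul_self_eq_norm_sq, conjTranspose_conjTranspose]
  rw [hA, re_trace_conjTranspose_mul_self_eq_norm_sq, trace_mul_eq_inner_vec, ← mul_pow]
  exact pow_le_pow_left₀ (norm_nonneg _) (norm_inner_le_norm _ _) 2

lemma sum_sum_norm_trace_mul_sq_le {ι κ : Type*} [Fintype ι] [Fintype κ]
    (A : ι → Matrix m n 𝕜) (B : κ → Matrix n m 𝕜) :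
    ∑ i, ∑ j, ‖(A i * B j).trace‖ ^ 2 ≤
      (∑ i, RCLike.re ((A i)ᴴ * A i).trace) * ∑ j, RCLike.re ((B j)ᴴ * B j).trace := by
  rw [Finset.sum_mul_sum]
  gcongr with i _ j _
  exact norm_trace_mul_sq_le (A i) (B j)

lemma trace_conjTranspose_mul_add_trace_conjTranspose_mul_sub (P Q : Matrix m n 𝕜) :
    ((P + Q)ᴴ * (P + Q)).trace + ((P - Q)ᴴ * (P - Q)).trace =
      2 * ((Pᴴ * P).trace + (Qᴴ * Q).trace) := by
  simp only [conjTranspose_add, conjTranspose_sub, Matrix.add_mul, Matrix.mul_add,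
    Matrix.sub_mul, Matrix.mul_sub, trace_add, trace_sub]
  ring

lemma trace_conjTranspose_mul_sub_smul (Y s : Matrix m n 𝕜) {c : 𝕜}
    (hs : (sᴴ * s).trace = 1) (hc : (sᴴ * Y).trace = c) :
    ((Y - c • s)ᴴ * (Y - c • s)).trace = (Yᴴ * Y).trace - (‖c‖ : 𝕜) ^ 2 := by
  have hc' : (Yᴴ * s).trace = star c := by
    rw [← hc, ← trace_conjTranspose, conjTranspose_mul, conjTranspose_conjTranspose]
  simp only [conjTranspose_sub, conjTranspose_smul, Matrix.sub_mul, Matrix.mul_sub,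
    Matrix.smul_mul, Matrix.mul_smul, trace_sub, trace_smul, hs, hc, hc', smul_eq_mul]
  rw [RCLike.star_def, mul_comm, RCLike.mul_conj]
  ring

lemma trace_anticommutator_add_trace_commutator {s : Matrix n n 𝕜} (hs : s.IsHermitian)
    (K : Matrix n n 𝕜) :
    ((s * Kᴴ + Kᴴ * s)ᴴ * (s * Kᴴ + Kᴴ * s)).trace + ((s * K - K * s)ᴴ * (s * K - K * s)).trace =
      2 * ((Kᴴ * K + K * Kᴴ) * (s * s)).trace := by
  have hC : ((s * K - K * s)ᴴ * (s * K - K * s)).trace =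
      ((s * Kᴴ - Kᴴ * s)ᴴ * (s * Kᴴ - Kᴴ * s)).trace := by
    have : s * Kᴴ - Kᴴ * s = -(s * K - K * s)ᴴ := by
      simp [conjTranspose_sub, conjTranspose_mul, hs.eq]
    rw [this, conjTranspose_neg, conjTranspose_conjTranspose, neg_mul_neg, trace_mul_comm]
  have h1 : ((s * Kᴴ)ᴴ * (s * Kᴴ)).trace = (Kᴴ * K * (s * s)).trace := by
    simpa only [conjTranspose_mul, conjTranspose_conjTranspose, hs.eq, mul_assoc]
      using trace_mul_comm (K * s * s) Kᴴ
  have h2 : ((Kᴴ * s)ᴴ * (Kᴴ * s)).trace = (K * Kᴴ * (s * s)).trace := by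
    simpa only [conjTranspose_mul, conjTranspose_conjTranspose, hs.eq, mul_assoc]
      using trace_mul_comm s (K * Kᴴ * s)
  rw [hC, trace_conjTranspose_mul_add_trace_conjTranspose_mul_sub, h1, h2, Matrix.add_mul,
    trace_add]

section CommRing
variable {R : Type*} [CommRing R]

/-- When `tr(s * s) = 1`, the component of `{s, X}` orthogonal to `s` in the Frobenius inner
product. -/
def centeredAnticommutator (s X : Matrix n n R) : Matrix n n R :=
  s * X + X * s - (2 * (X * (s * s)).trace) • s

lemma trace_commutator_mul_centeredAnticommutator (s L X : Matrix n n R) :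
    ((s * L - L * s) * centeredAnticommutator s X).trace = ((L * X - X * L) * (s * s)).trace := by
  have e1 : (s * L * s * X).trace = (L * s * X * s).trace := by
    simpa only [mul_assoc] using trace_mul_comm s (L * s * X)
  have e2 : (s * L * X * s).trace = (L * X * s * s).trace := by
    simpa only [mul_assoc] using trace_mul_comm s (L * X * s)
  have e3 : (s * L * s).trace = (L * s * s).trace := by
    simpa only [mul_assoc] using trace_mul_comm s (L * s)
  have e4 : (L * s * s * X).trace = (X * L * s * s).trace := by
    simpa only [mul_assoc] using trace_mul_comm (L * s * s) X
  simp only [centeredAnticommutator, sub_mul, mul_add, mul_sub, mul_smul_comm,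
    trace_add, trace_sub, trace_smul, ← mul_assoc, e1, e2, e3, e4]
  ring

end CommRing

lemma re_trace_centeredAnticommutator_add_re_trace_commutator {s : Matrix n n 𝕜}
    (hs : s.IsHermitian) (hs1 : (s * s).trace = 1) (K : Matrix n n 𝕜) :
    RCLike.re ((centeredAnticommutator s Kᴴ)ᴴ * centeredAnticommutator s Kᴴ).trace +
        RCLike.re ((s * K - K * s)ᴴ * (s * K - K * s)).trace =
      2 * RCLike.re ((Kᴴ * K + K * Kᴴ) * (s * s)).trace - 4 * ‖(K * (s * s)).trace‖ ^ 2 := by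
  have hc : (sᴴ * (s * Kᴴ + Kᴴ * s)).trace = 2 * (Kᴴ * (s * s)).trace := by
    rw [hs.eq, Matrix.mul_add, trace_add, ← mul_assoc, trace_mul_comm, ← mul_assoc,
      trace_mul_comm s, two_mul]
  have hnorm : ‖2 * (Kᴴ * (s * s)).trace‖ = 2 * ‖(K * (s * s)).trace‖ := by
    have hadj : s * s * Kᴴ = (K * (s * s))ᴴ := by simp [conjTranspose_mul, hs.eq, mul_assoc]
    rw [norm_mul, RCLike.norm_two, trace_mul_comm, hadj, trace_conjTranspose, norm_star]
  rw [← map_add, centeredAnticommutator,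
    trace_conjTranspose_mul_sub_smul _ _ (by rwa [hs.eq]) hc, sub_add_eq_add_sub,
    trace_anticommutator_add_trace_commutator hs, hnorm, map_sub, RCLike.re_ofReal_pow,
    RCLike.mul_re, RCLike.ofNat_re, RCLike.ofNat_im]
  ring

end Matrix

section
variable {d : ℕ}

lemma psdSqrt_isHermitian {ρ : Matrix (Fin d) (Fin d) ℂ} (hρ : ρ.PosSemidef) :
    (psdSqrt hρ).IsHermitian := by
  have hD : (diagonal fun i => ((Real.sqrt (hρ.1.eigenvalues i) : ℝ) : ℂ)).IsHermitian :=
    isHermitian_diagonal_of_self_adjoint _ (by ext i; simp)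
  simpa [psdSqrt, Unitary.coe_star, star_eq_conjTranspose]
    using isHermitian_mul_mul_conjTranspose (hρ.1.eigenvectorUnitary : Matrix (Fin d) (Fin d) ℂ) hD

lemma psdSqrt_mul_self {ρ : Matrix (Fin d) (Fin d) ℂ} (hρ : ρ.PosSemidef) :
    psdSqrt hρ * psdSqrt hρ = ρ := by
  set U : Matrix (Fin d) (Fin d) ℂ := (hρ.1.eigenvectorUnitary : Matrix (Fin d) (Fin d) ℂ)
  set D : Matrix (Fin d) (Fin d) ℂ := diagonal fun i => ((Real.sqrt (hρ.1.eigenvalues i) : ℝ) : ℂ)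
  have hU : star U * U = 1 := Unitary.coe_star_mul_self _
  have hD : D * D = diagonal (RCLike.ofReal ∘ hρ.1.eigenvalues) := by
    rw [diagonal_mul_diagonal]
    congr 1
    funext i
    simp [← Complex.ofReal_mul, Real.mul_self_sqrt (hρ.eigenvalues_nonneg i)]
  calc psdSqrt hρ * psdSqrt hρ = U * (D * (star U * U) * D) * star U := by
        simp only [psdSqrt, U, D, mul_assoc]
    _ = ρ := by
        rw [hU, mul_one, hD]
        exact hρ.1.spectral_theorem.symm

lemma re_trace_centeredAnticommutator_psdSqrt {ρ : Matrix (Fin d) (Fin d) ℂ} (hρ : ρ.PosSemidef)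
    (htr : ρ.trace = 1) (K : Matrix (Fin d) (Fin d) ℂ) :
    ((centeredAnticommutator (psdSqrt hρ) Kᴴ)ᴴ * centeredAnticommutator (psdSqrt hρ) Kᴴ).trace.re =
      4 * opVar ρ K -
        ((psdSqrt hρ * K - K * psdSqrt hρ)ᴴ * (psdSqrt hρ * K - K * psdSqrt hρ)).trace.re := by
  have h := re_trace_centeredAnticommutator_add_re_trace_commutator
    (psdSqrt_isHermitian hρ) (by rw [psdSqrt_mul_self, htr]) K
  rw [psdSqrt_mul_self] at h
  simp only [RCLike.re_to_complex] at h
  rw [opVar]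
  linarith

lemma sum_re_trace_centeredAnticommutator_psdSqrt {n : ℕ} {ρ : Matrix (Fin d) (Fin d) ℂ}
    (hρ : ρ.PosSemidef) (htr : ρ.trace = 1) (K : Fin n → Matrix (Fin d) (Fin d) ℂ) :
    ∑ j, ((centeredAnticommutator (psdSqrt hρ) (K j)ᴴ)ᴴ *
        centeredAnticommutator (psdSqrt hρ) (K j)ᴴ).trace.re =
      2 * (2 * chanVar ρ K - chanSkew ρ hρ K) := by
  simp only [re_trace_centeredAnticommutator_psdSqrt hρ htr, Finset.sum_sub_distrib,
    ← Finset.mul_sum, chanVar, chanSkew]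
  ring

end

theorem stmt_4_general {d m n : ℕ}
    (ρ : Matrix (Fin d) (Fin d) ℂ) (hρ : ρ.PosSemidef) (htr : ρ.trace = 1)
    (L : Fin m → Matrix (Fin d) (Fin d) ℂ)
    (K : Fin n → Matrix (Fin d) (Fin d) ℂ) :
    chanSkew ρ hρ L * (2 * chanVar ρ K - chanSkew ρ hρ K) ≥
      (1 / 4) * ∑ i, ∑ j,
        ‖((L i * (K j)ᴴ - (K j)ᴴ * L i) * ρ).trace‖ ^ 2 := by
  set s := psdSqrt hρ
  have hA : ∑ i, ((s * L i - L i * s)ᴴ * (s * L i - L i * s)).trace.re = 2 * chanSkew ρ hρ L := by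
    rw [chanSkew]
    ring
  have hCS := sum_sum_norm_trace_mul_sq_le (fun i ↦ s * L i - L i * s)
    (fun j ↦ centeredAnticommutator s (K j)ᴴ)
  simp only [trace_commutator_mul_centeredAnticommutator, s, psdSqrt_mul_self,
    RCLike.re_to_complex] at hCS
  rw [hA, sum_re_trace_centeredAnticommutator_psdSqrt hρ htr] at hCS
  linarith

/-- `Ĩ_ρ(Ψ) · J̃_ρ(Φ) ≥ ¼ Σ_{i,j} |tr([L_i, K_j†] ρ)|²`, where
`Ĩ_ρ = I_ρ` and `J̃_ρ = 2 V_ρ − I_ρ`. -/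
theorem stmt_4 {d m n : ℕ}
    (ρ : Matrix (Fin d) (Fin d) ℂ) (hρ : ρ.PosSemidef) (htr : ρ.trace = 1)
    (L : Fin m → Matrix (Fin d) (Fin d) ℂ) (hL : ∑ i, (L i)ᴴ * L i = 1)
    (K : Fin n → Matrix (Fin d) (Fin d) ℂ) (hK : ∑ j, (K j)ᴴ * K j = 1) :
    chanSkew ρ hρ L * (2 * chanVar ρ K - chanSkew ρ hρ K) ≥
      (1 / 4) * ∑ i, ∑ j,
        ‖((L i * (K j)ᴴ - (K j)ᴴ * L i) * ρ).trace‖ ^ 2 :=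
  stmt_4_general ρ hρ htr L K
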